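/- Let 𝒢 be a snake graph and let P and P' be two perfect matchings of 𝒢 such that neither P nor P' contains an interior edge of 𝒢 and P ∩ P' = ∅. Then P ∪ P' is exactly the set of all boundary edges of 𝒢. -/

import Mathlib

/-!
Basic definitions: tiles, snake graphs, perfect matchings, sign functions.

A tile is a unit square in the plane, identified by the coordinates of its
south-west corner.  An edge of the integer grid is encoded as a pair
`(p, b) : (ℤ × ℤ) × Bool` where `b = true` means the horizontal edge from `p`
to `p + (1,0)` and `b = false` means the vertical edge from `p` to `p + (0,1)`.

A snake graph is a sequence of tiles `G_1, …, G_d` (`d ≥ 1`) in which each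
tile `G_{i+1}` is either the tile directly to the east or directly to the
north of `G_i`; this is exactly the combinatorial content of conditions
(i)–(iii) in the definition of a snake graph.  We record the position of the
first tile and the sequence of steps (`true` = east, `false` = north).
-/

abbrev Pt : Type := ℤ × ℤ

/-- An edge of the integer grid: `(p, true)` is the horizontal unit edge with left
endpoint `p`, and `(p, false)` is the vertical unit edge with bottom endpoint `p`. -/
abbrev Edge : Type := Pt × Bool

/-- The two endpoints of an edge. -/
def Edge.ends (e : Edge) : Finset Pt :=
  {e.1, e.1 + (if e.2 then ((1 : ℤ), (0 : ℤ)) else ((0 : ℤ), (1 : ℤ)))}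

/-- The south edge of the tile with south-west corner `p`. -/
def southEdge (p : Pt) : Edge := (p, true)
/-- The north edge of the tile with south-west corner `p`. -/
def northEdge (p : Pt) : Edge := (p + ((0 : ℤ), (1 : ℤ)), true)
/-- The west edge of the tile with south-west corner `p`. -/
def westEdge (p : Pt) : Edge := (p, false)
/-- The east edge of the tile with south-west corner `p`. -/
def eastEdge (p : Pt) : Edge := (p + ((1 : ℤ), (0 : ℤ)), false)

/-- The four edges of the tile with south-west corner `p`. -/
def tileEdges (p : Pt) : Finset Edge := {southEdge p, northEdge p, westEdge p, eastEdge p}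

/-- The four vertices of the tile with south-west corner `p`. -/
def tileVerts (p : Pt) : Finset Pt :=
  {p, p + ((1 : ℤ), (0 : ℤ)), p + ((0 : ℤ), (1 : ℤ)), p + ((1 : ℤ), (1 : ℤ))}

/-- A snake graph `𝒢 = (G_1, …, G_d)`, `d ≥ 1`: a sequence of tiles in which each
tile `G_{i+1}` shares exactly one edge with `G_i`, this edge being the north edge of
`G_i` and the south edge of `G_{i+1}`, or the east edge of `G_i` and the west edge of
`G_{i+1}`.  `step i = true` means `G_{i+1}` is east of `G_i`, `step i = false` means
`G_{i+1}` is north of `G_i`; only the values `step i` for `1 ≤ i ≤ d - 1` are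
relevant. -/
structure SnakeGraph where
  d : ℕ
  one_le_d : 1 ≤ d
  base : Pt
  step : ℕ → Bool

namespace SnakeGraph

/-- The south-west corner of the `i`-th tile, `1 ≤ i ≤ d`. -/
def pos (G : SnakeGraph) (i : ℕ) : Pt :=
  G.base + ∑ j ∈ Finset.Ico 1 i,
    (if G.step j then ((1 : ℤ), (0 : ℤ)) else ((0 : ℤ), (1 : ℤ)))

/-- The set of edges of the snake graph. -/
def edges (G : SnakeGraph) : Finset Edge :=
  (Finset.Icc 1 G.d).biUnion fun i => tileEdges (G.pos i)

/-- The set of vertices of the snake graph. -/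
def verts (G : SnakeGraph) : Finset Pt :=
  (Finset.Icc 1 G.d).biUnion fun i => tileVerts (G.pos i)

/-- The interior edge `e_i` shared by the tiles `G_i` and `G_{i+1}` (`1 ≤ i ≤ d-1`). -/
def intEdge (G : SnakeGraph) (i : ℕ) : Edge :=
  if G.step i then eastEdge (G.pos i) else northEdge (G.pos i)

/-- An edge is interior if it is one of the edges `e_1, …, e_{d-1}`. -/
def IsInteriorEdge (G : SnakeGraph) (e : Edge) : Prop :=
  ∃ i, 1 ≤ i ∧ i < G.d ∧ e = G.intEdge i

/-- A boundary edge is an edge of the snake graph which is not interior. -/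
def IsBoundaryEdge (G : SnakeGraph) (e : Edge) : Prop :=
  e ∈ G.edges ∧ ¬ G.IsInteriorEdge e

/-- A perfect matching of the snake graph: a set of edges of `G` such that every
vertex of `G` is incident to exactly one edge of the set. -/
def IsPerfectMatching (G : SnakeGraph) (P : Finset Edge) : Prop :=
  (∀ e ∈ P, e ∈ G.edges) ∧ ∀ v ∈ G.verts, ∃! e, e ∈ P ∧ v ∈ Edge.ends e

/-- A sign function on the snake graph: on every tile the north and west edges have
the same sign, the south and east edges have the same sign, and the signs of the
north and south edges are opposite.  (Signs are encoded as `Bool`.) -/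
def IsSignFunction (G : SnakeGraph) (f : Edge → Bool) : Prop :=
  ∀ i, 1 ≤ i → i ≤ G.d →
    f (northEdge (G.pos i)) = f (westEdge (G.pos i)) ∧
    f (southEdge (G.pos i)) = f (eastEdge (G.pos i)) ∧
    f (northEdge (G.pos i)) = ! f (southEdge (G.pos i))

end SnakeGraph

/-!
Counting. Measure points by their level `x + y`; the south-west corner of the `i`-th tile
lies on level `level base + i - 1`. Each tile after the first brings two new vertices (they
lie above every earlier vertex except the north-east corner of its predecessor) and at most
three new edges (it shares `e_n` with its predecessor). So a snake graph with `d` tiles has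
at least `2d + 2` vertices and at most `3d + 1` edges, `d - 1` of them interior (they lie on
distinct levels): at most `2d + 2` boundary edges. Two disjoint perfect matchings without
interior edges already contain at least `2d + 2` boundary edges.
-/

open Finset

namespace SnakeGraph

def level (v : Pt) : ℤ := v.1 + v.2

@[simp] lemma level_add (u v : Pt) : level (u + v) = level u + level v := by
  simp only [level, Prod.fst_add, Prod.snd_add]; ring

@[simp] lemma level_mk (a b : ℤ) : level (a, b) = a + b := rfl

variable (G : SnakeGraph)

lemma pos_succ {i : ℕ} (hi : 1 ≤ i) :
    G.pos (i + 1) = G.pos i + if G.step i then (1, 0) else (0, 1) := by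
  rw [pos, pos, sum_Ico_succ_top hi, add_assoc]

lemma level_pos {i : ℕ} (hi : 1 ≤ i) : level (G.pos i) = level G.base + i - 1 := by
  induction i, hi using Nat.le_induction with
  | base => simp [pos]
  | succ n hn ih =>
    rw [G.pos_succ hn, level_add, ih]
    cases G.step n <;> simp <;> ring

def vertsUpTo (n : ℕ) : Finset Pt := (Icc 1 n).biUnion fun i => tileVerts (G.pos i)

def edgesUpTo (n : ℕ) : Finset Edge := (Icc 1 n).biUnion fun i => tileEdges (G.pos i)

lemma vertsUpTo_succ (n : ℕ) :
    G.vertsUpTo (n + 1) = G.vertsUpTo n ∪ tileVerts (G.pos (n + 1)) := by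
  rw [vertsUpTo, ← insert_Icc_right_eq_Icc_add_one (by omega), biUnion_insert, union_comm]
  rfl

lemma edgesUpTo_succ (n : ℕ) :
    G.edgesUpTo (n + 1) = G.edgesUpTo n ∪ tileEdges (G.pos (n + 1)) := by
  rw [edgesUpTo, ← insert_Icc_right_eq_Icc_add_one (by omega), biUnion_insert, union_comm]
  rfl

lemma card_tileVerts (p : Pt) : (tileVerts p).card = 4 := by
  simp [tileVerts, card_insert_of_notMem, Prod.ext_iff]

lemma level_le_or_eq_of_mem_vertsUpTo {n : ℕ} {v : Pt} (hv : v ∈ G.vertsUpTo n) :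
    level v ≤ level G.base + n ∨ v = G.pos n + (1, 1) := by
  obtain ⟨j, hj, hvj⟩ := mem_biUnion.1 hv
  rw [mem_Icc] at hj
  have hlevel := G.level_pos hj.1
  simp only [tileVerts, mem_insert, mem_singleton] at hvj
  rcases eq_or_lt_of_le hj.2 with rfl | hlt
  · rcases hvj with rfl | rfl | rfl | rfl <;> simp [hlevel]
  · left
    rcases hvj with rfl | rfl | rfl | rfl <;> simp [hlevel] <;> omega

lemma pos_succ_eq_add_unit {n : ℕ} (hn : 1 ≤ n) :
    ∃ t : Pt, (t = (1, 0) ∨ t = (0, 1)) ∧ G.pos (n + 1) = G.pos n + t := by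
  rw [G.pos_succ hn]
  cases G.step n
  · exact ⟨_, Or.inr rfl, rfl⟩
  · exact ⟨_, Or.inl rfl, rfl⟩

lemma notMem_vertsUpTo_of_level_lt {n : ℕ} {v : Pt} (hv : level G.base + n < level v)
    (hne : v ≠ G.pos n + (1, 1)) : v ∉ G.vertsUpTo n := fun hmem =>
  (G.level_le_or_eq_of_mem_vertsUpTo hmem).elim (fun h => by omega) hne

lemma card_vertsUpTo_add_two_le {n : ℕ} (hn : 1 ≤ n) :
    (G.vertsUpTo n).card + 2 ≤ (G.vertsUpTo (n + 1)).card := by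
  obtain ⟨t, ht, hq⟩ := G.pos_succ_eq_add_unit hn
  have hlevel := G.level_pos hn
  have hlevel_t : level t = 1 := by rcases ht with rfl | rfl <;> rfl
  have hnew₁ : G.pos (n + 1) + t ∉ G.vertsUpTo n := by
    refine G.notMem_vertsUpTo_of_level_lt (by simp [hq, hlevel, hlevel_t]) ?_
    rcases ht with rfl | rfl <;> simp [hq, add_assoc, Prod.ext_iff]
  have hnew₂ : G.pos (n + 1) + (1, 1) ∉ G.vertsUpTo n := by
    refine G.notMem_vertsUpTo_of_level_lt (by simp [hq, hlevel, hlevel_t]) ?_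
    rcases ht with rfl | rfl <;> simp [hq, add_assoc, Prod.ext_iff]
  have hne : G.pos (n + 1) + t ≠ G.pos (n + 1) + (1, 1) := by
    rcases ht with rfl | rfl <;> simp [Prod.ext_iff]
  calc (G.vertsUpTo n).card + 2
      = (insert (G.pos (n + 1) + t) (insert (G.pos (n + 1) + (1, 1)) (G.vertsUpTo n))).card := by
        rw [card_insert_of_notMem (by simp [hne, hnew₁]), card_insert_of_notMem hnew₂]
    _ ≤ (G.vertsUpTo (n + 1)).card := by
        refine card_le_card ?_
        rw [vertsUpTo_succ, insert_subset_iff, insert_subset_iff]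
        refine ⟨mem_union_right _ ?_, mem_union_right _ ?_, subset_union_left⟩
        · rcases ht with rfl | rfl <;> simp [tileVerts]
        · simp [tileVerts]

lemma two_mul_add_two_le_card_vertsUpTo {n : ℕ} (hn : 1 ≤ n) :
    2 * n + 2 ≤ (G.vertsUpTo n).card := by
  induction n, hn using Nat.le_induction with
  | base => simp [vertsUpTo, card_tileVerts]
  | succ n hn ih => have := G.card_vertsUpTo_add_two_le hn; omega

lemma two_mul_add_two_le_card_verts : 2 * G.d + 2 ≤ G.verts.card :=
  G.two_mul_add_two_le_card_vertsUpTo G.one_le_d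

lemma intEdge_mem_tileEdges (i : ℕ) : G.intEdge i ∈ tileEdges (G.pos i) := by
  rw [intEdge]
  cases G.step i <;> simp [tileEdges]

lemma intEdge_mem_tileEdges_succ {i : ℕ} (hi : 1 ≤ i) :
    G.intEdge i ∈ tileEdges (G.pos (i + 1)) := by
  rw [intEdge, G.pos_succ hi]
  cases G.step i <;> simp [tileEdges, northEdge, southEdge, eastEdge, westEdge]

lemma card_edgesUpTo_succ_le {n : ℕ} (hn : 1 ≤ n) :
    (G.edgesUpTo (n + 1)).card ≤ (G.edgesUpTo n).card + 3 := by
  have hshared : G.intEdge n ∈ G.edgesUpTo n :=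
    mem_biUnion.2 ⟨n, mem_Icc.2 ⟨hn, le_rfl⟩, G.intEdge_mem_tileEdges n⟩
  have hnew : tileEdges (G.pos (n + 1)) \ G.edgesUpTo n ⊆
      (tileEdges (G.pos (n + 1))).erase (G.intEdge n) := fun e he =>
    mem_erase.2 ⟨fun h => (mem_sdiff.1 he).2 (h ▸ hshared), (mem_sdiff.1 he).1⟩
  calc (G.edgesUpTo (n + 1)).card
      = (G.edgesUpTo n).card + (tileEdges (G.pos (n + 1)) \ G.edgesUpTo n).card := by
        rw [edgesUpTo_succ, ← card_union_of_disjoint disjoint_sdiff, union_sdiff_self_eq_union]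
    _ ≤ (G.edgesUpTo n).card + ((tileEdges (G.pos (n + 1))).erase (G.intEdge n)).card := by
        gcongr
    _ ≤ (G.edgesUpTo n).card + 3 := by
        rw [card_erase_of_mem (G.intEdge_mem_tileEdges_succ hn)]
        have : (tileEdges (G.pos (n + 1))).card ≤ 4 := card_le_four
        omega

lemma card_edgesUpTo_le {n : ℕ} (hn : 1 ≤ n) : (G.edgesUpTo n).card ≤ 3 * n + 1 := by
  induction n, hn using Nat.le_induction with
  | base => simp only [edgesUpTo, Icc_self, singleton_biUnion]; exact card_le_four
  | succ n hn ih => have := G.card_edgesUpTo_succ_le hn; omega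

lemma card_edges_le : G.edges.card ≤ 3 * G.d + 1 := G.card_edgesUpTo_le G.one_le_d

def interiorEdges : Finset Edge := (Ico 1 G.d).image G.intEdge

lemma mem_interiorEdges {e : Edge} : e ∈ G.interiorEdges ↔ G.IsInteriorEdge e := by
  simp [interiorEdges, IsInteriorEdge, eq_comm, and_assoc]

lemma isBoundaryEdge_iff {e : Edge} : G.IsBoundaryEdge e ↔ e ∈ G.edges \ G.interiorEdges := by
  rw [IsBoundaryEdge, mem_sdiff, mem_interiorEdges]

lemma level_intEdge {i : ℕ} (hi : 1 ≤ i) : level (G.intEdge i).1 = level G.base + i := by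
  have := G.level_pos hi
  rw [intEdge]
  cases G.step i <;> simp [northEdge, eastEdge, this]

lemma card_interiorEdges : G.interiorEdges.card = G.d - 1 := by
  rw [interiorEdges, card_image_of_injOn, Nat.card_Ico]
  intro i hi j hj hij
  have := congrArg (fun e : Edge => level e.1) hij
  simp only [coe_Ico, Set.mem_Ico] at hi hj this
  rw [G.level_intEdge hi.1, G.level_intEdge hj.1] at this
  omega

lemma interiorEdges_subset_edges : G.interiorEdges ⊆ G.edges := by
  intro e he
  obtain ⟨i, hi, rfl⟩ := mem_image.1 he
  rw [mem_Ico] at hi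
  exact mem_biUnion.2 ⟨i, mem_Icc.2 ⟨hi.1, hi.2.le⟩, G.intEdge_mem_tileEdges i⟩

lemma card_edges_sdiff_interiorEdges_le : (G.edges \ G.interiorEdges).card ≤ 2 * G.d + 2 := by
  rw [card_sdiff_of_subset G.interiorEdges_subset_edges, card_interiorEdges]
  have := G.card_edges_le
  have := G.one_le_d
  omega

end SnakeGraph

lemma card_le_two_mul_card_of_cover {V : Finset Pt} {P : Finset Edge}
    (hcover : ∀ v ∈ V, ∃ e ∈ P, v ∈ e.ends) : V.card ≤ 2 * P.card :=
  calc V.card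
      ≤ (P.biUnion Edge.ends).card := card_le_card fun v hv => mem_biUnion.2 (hcover v hv)
    _ ≤ ∑ e ∈ P, e.ends.card := card_biUnion_le
    _ ≤ ∑ _e ∈ P, 2 := sum_le_sum fun e _ => card_le_two
    _ = 2 * P.card := by rw [sum_const, smul_eq_mul, mul_comm]

/-- Let `𝒢` be a snake graph and `P`, `P'` two perfect matchings of
`𝒢` such that neither `P` nor `P'` contains an interior edge of `𝒢` and
`P ∩ P' = ∅`.  Then `P ∪ P'` is exactly the set of all boundary edges of `𝒢`. -/
theorem snake_matchings_union_eq_boundary (G : SnakeGraph) (P P' : Finset Edge)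
    (hP : G.IsPerfectMatching P) (hP' : G.IsPerfectMatching P')
    (hPint : ∀ e ∈ P, ¬ G.IsInteriorEdge e)
    (hP'int : ∀ e ∈ P', ¬ G.IsInteriorEdge e)
    (hdisj : ∀ e : Edge, ¬ (e ∈ P ∧ e ∈ P')) :
    ∀ e : Edge, e ∈ P ∪ P' ↔ G.IsBoundaryEdge e := by
  have hsub : P ∪ P' ⊆ G.edges \ G.interiorEdges := by
    intro e he
    rw [← G.isBoundaryEdge_iff]
    rcases mem_union.1 he with h | h
    exacts [⟨hP.1 e h, hPint e h⟩, ⟨hP'.1 e h, hP'int e h⟩]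
  have hcard : (G.edges \ G.interiorEdges).card ≤ (P ∪ P').card := by
    rw [card_union_of_disjoint (disjoint_left.2 fun e h h' => hdisj e ⟨h, h'⟩)]
    have hboundary := G.card_edges_sdiff_interiorEdges_le
    have hverts := G.two_mul_add_two_le_card_verts
    have hPcover := card_le_two_mul_card_of_cover fun v hv => (hP.2 v hv).exists
    have hP'cover := card_le_two_mul_card_of_cover fun v hv => (hP'.2 v hv).exists
    omega
  intro e
  rw [eq_of_subset_of_card_le hsub hcard, G.isBoundaryEdge_iff]
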